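/- arXiv:2603.09043 — 2 statements merged into one kernel-verified Lean document; each statement's English description precedes it below -/
import Mathlib

section
/- Prompt-only recovery bound (ε = 0 case): if corrective interventions can only change the activation status of ingredients in a set P ⊆ Fin k, so that for every ingredient i ∉ P the recovered state agrees with the drifted state on whether gᵢ is active, and 𝒟 = F(s_ref) △ F(s_drift) is nonempty, then the recovery ratio R = 1 − d(s_recov, s_ref)/d(s_drift, s_ref) satisfies R ≤ |P ∩ 𝒟| / |𝒟|, where d(x,y) = |F(x) △ F(y)| / k. -/
open scoped symmDiff

/-!
Every ingredient of `𝒟 = F(s_ref) ∆ F(s_drift)` outside `P` keeps its drifted status in the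
recovered state, so it still separates the recovered state from the reference one. Hence
`|𝒟| ≤ |P ∩ 𝒟| + |F(s_recov) ∆ F(s_ref)|`; the common factor `1 / k` cancels in the ratio of
distances, and dividing by `|𝒟|` gives the bound.
-/

namespace Finset

variable {α : Type*} [DecidableEq α]

theorem symmDiff_sdiff_subset_symmDiff_of_mem_iff {A B C P : Finset α}
    (h : ∀ i ∉ P, (i ∈ C ↔ i ∈ B)) : (A ∆ B) \ P ⊆ C ∆ A := by
  intro i hi
  obtain ⟨hiAB, hiP⟩ := mem_sdiff.mp hi
  rw [mem_symmDiff] at hiAB ⊢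
  have := h i hiP
  tauto

theorem card_symmDiff_le_card_inter_add_card_symmDiff {A B C P : Finset α}
    (h : ∀ i ∉ P, (i ∈ C ↔ i ∈ B)) : #(A ∆ B) ≤ #(P ∩ (A ∆ B)) + #(C ∆ A) :=
  calc #(A ∆ B) = #((A ∆ B) ∩ P) + #((A ∆ B) \ P) := (card_inter_add_card_sdiff _ _).symm
    _ ≤ #(P ∩ (A ∆ B)) + #(C ∆ A) := by
      rw [inter_comm]
      gcongr
      exact symmDiff_sdiff_subset_symmDiff_of_mem_iff h

end Finset

theorem one_sub_div_div_div_le_div {K : Type*} [Field K] [LinearOrder K] [IsStrictOrderedRing K]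
    {b c p k : K} (hk : k ≠ 0) (hb : 0 < b) (h : b ≤ p + c) :
    1 - (c / k) / (b / k) ≤ p / b := by
  rw [div_div_div_cancel_right₀ hk, sub_le_iff_le_add, ← add_div, le_div_iff₀ hb, one_mul]
  exact h

theorem prompt_only_recovery_bound {S : Type*} {k : ℕ}
    (g : Fin k → S → Prop) [∀ i x, Decidable (g i x)]
    (sref sdrift srecov : S) (P : Finset (Fin k))
    (F : S → Finset (Fin k))
    (hF : ∀ x, F x = Finset.univ.filter (fun i => g i x))
    (hP : ∀ i ∉ P, (g i srecov ↔ g i sdrift))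
    (hD : (F sref ∆ F sdrift).Nonempty) :
    1 - (((F srecov ∆ F sref).card : ℚ) / k) / (((F sdrift ∆ F sref).card : ℚ) / k)
      ≤ ((P ∩ (F sref ∆ F sdrift)).card : ℚ) / ((F sref ∆ F sdrift).card : ℚ) := by
  obtain ⟨i₀, hi₀⟩ := hD
  have hk : (k : ℚ) ≠ 0 := Nat.cast_ne_zero.mpr i₀.pos.ne'
  have hagree : ∀ i ∉ P, (i ∈ F srecov ↔ i ∈ F sdrift) := by
    simpa only [hF, Finset.mem_filter, Finset.mem_univ, true_and] using hP
  rw [symmDiff_comm (F sdrift)]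
  apply one_sub_div_div_div_le_div hk (by exact_mod_cast Finset.card_pos.mpr ⟨i₀, hi₀⟩)
  exact_mod_cast Finset.card_symmDiff_le_card_inter_add_card_symmDiff hagree
end

section
/- RAG is not monotone for co-instantiation: there exist a state space S, predicates g₁, g₂, a horizon Δ ≥ 1, stride 1, a finite evaluation set T, and two trajectories τ₀ and τ_R such that every window of τ_R satisfies ingredient-wise occurrence of both g₁ and g₂, yet the strong persistence of τ_R over T is strictly less than the strong persistence of τ₀ over T. -/
open scoped Classical

theorem rag_not_monotone_for_coinst :
    ∃ (S : Type) (g₁ g₂ : S → Prop) (Δ : ℕ) (T : Finset ℕ) (τ₀ τR : ℕ → S),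
      1 ≤ Δ ∧ T.Nonempty ∧
      (∀ t ∈ T, (∃ j ≤ Δ, g₁ (τR (t + j))) ∧ (∃ j ≤ Δ, g₂ (τR (t + j)))) ∧
      (1 / (T.card : ℝ)) *
          ∑ t ∈ T, (if ∃ j ≤ Δ, g₁ (τR (t + j)) ∧ g₂ (τR (t + j)) then (1 : ℝ) else 0)
        < (1 / (T.card : ℝ)) *
          ∑ t ∈ T, (if ∃ j ≤ Δ, g₁ (τ₀ (t + j)) ∧ g₂ (τ₀ (t + j)) then (1 : ℝ) else 0) := by
  refine ⟨ℕ, (fun n => n = 1 ∨ n = 3), (fun n => n = 2 ∨ n = 3), 1, {0},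
    (fun _ => 3), (fun t => if t = 0 then 1 else 2), le_refl 1, ⟨0, by simp⟩, ?_, ?_⟩
  · intro t ht
    simp only [Finset.mem_singleton] at ht
    subst ht
    exact ⟨⟨0, by norm_num⟩, ⟨1, by norm_num⟩⟩
  · have h1 : ¬ ∃ j ≤ 1, ((if (0 + j : ℕ) = 0 then (1:ℕ) else 2) = 1 ∨ (if (0+j:ℕ) = 0 then (1:ℕ) else 2) = 3) ∧
        ((if (0+j:ℕ) = 0 then (1:ℕ) else 2) = 2 ∨ (if (0+j:ℕ) = 0 then (1:ℕ) else 2) = 3) := by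
      rintro ⟨j, hj, h⟩
      interval_cases j <;> simp_all
    rw [Finset.sum_singleton, Finset.sum_singleton, if_neg h1,
      if_pos (⟨0, Nat.zero_le 1, Or.inr rfl, Or.inr rfl⟩ :
        ∃ j ≤ 1, ((3:ℕ) = 1 ∨ (3:ℕ) = 3) ∧ ((3:ℕ) = 2 ∨ (3:ℕ) = 3))]
    norm_num
end
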